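/- arXiv:2405.09100 — 7 statements merged into one kernel-verified Lean document; each statement's English description precedes it below -/
import Mathlib

section
/- Let K be a finite simplicial complex on V all of whose faces have at most n + 1 elements, and let (α, β) be a bistellar pair of type h in K (viewed as n-dimensional). Then f_i(bm_α K) = f_i(K) for every i ≤ n if and only if n = 2h. -/
open Finset

variable {V : Type*} [DecidableEq V]

/-- An abstract simplicial complex: a set of finsets closed under taking subsets. -/
def IsSimplicialComplex (K : Set (Finset V)) : Prop :=
  ∀ S ∈ K, ∀ T ⊆ S, T ∈ K

/-- The boundary complex `∂s` of a finset `s`: all proper subsets of `s`. -/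
def bdry (s : Finset V) : Set (Finset V) := {T | T ⊂ s}

/-- The join `α * ∂β = {γ ∪ δ : γ ⊆ α, δ ⊊ β}` (this is `Λ_α`). -/
def joinSB (α β : Finset V) : Set (Finset V) :=
  {S | ∃ γ δ : Finset V, γ ⊆ α ∧ δ ⊂ β ∧ S = γ ∪ δ}

/-- The join `∂α * β = {γ ∪ δ : γ ⊊ α, δ ⊆ β}` (this is `Λ_β`). -/
def joinBS (α β : Finset V) : Set (Finset V) :=
  {S | ∃ γ δ : Finset V, γ ⊂ α ∧ δ ⊆ β ∧ S = γ ∪ δ}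

/-- The link of a face `α` in `K`. -/
def linkOf (K : Set (Finset V)) (α : Finset V) : Set (Finset V) :=
  {γ | γ ∩ α = ∅ ∧ γ ∪ α ∈ K}

/-- `(α, β)` is a bistellar pair of type `h` in `K`, viewed as `n`-dimensional. -/
def IsBistellarPair (K : Set (Finset V)) (n h : ℕ) (α β : Finset V) : Prop :=
  α ∈ K ∧ α.card = n - h + 1 ∧ β.card = h + 1 ∧ α ∩ β = ∅ ∧ β ∉ K ∧
    linkOf K α = bdry β

/-- The bistellar move `bm_α K = (K \ (α * ∂β)) ∪ (∂α * β)`. -/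
def bm (K : Set (Finset V)) (α β : Finset V) : Set (Finset V) :=
  (K \ joinSB α β) ∪ joinBS α β

/-- The `i`-th entry of the f-vector: the number of `i`-dimensional faces of `K`. -/
noncomputable def fvec (K : Set (Finset V)) (i : ℕ) : ℕ := {S ∈ K | S.card = i + 1}.ncard

/-- The set of `(n-1)`-dimensional faces of a complex `Λ` (members with `n` elements). -/
def faceSet (Λ : Set (Finset V)) (n : ℕ) : Set (Finset V) := {S ∈ Λ | S.card = n}

lemma joinBS_eq_joinSB (α β : Finset V) : joinBS α β = joinSB β α := by
  ext S
  constructor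
  · rintro ⟨γ, δ, h1, h2, rfl⟩; exact ⟨δ, γ, h2, h1, union_comm γ δ⟩
  · rintro ⟨γ, δ, h1, h2, rfl⟩; exact ⟨δ, γ, h2, h1, union_comm γ δ⟩

lemma joinSB_finite (α β : Finset V) : (joinSB α β).Finite := by
  apply Set.Finite.subset (Finset.finite_toSet ((α ∪ β).powerset))
  rintro S ⟨γ, δ, h1, h2, rfl⟩
  simp only [Finset.mem_coe, Finset.mem_powerset]
  exact union_subset (h1.trans subset_union_left) (h2.subset.trans subset_union_right)

lemma joinSB_subset {K : Set (Finset V)} (hK : IsSimplicialComplex K)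
    {α β : Finset V} (hlink : linkOf K α = bdry β) : joinSB α β ⊆ K := by
  rintro S ⟨γ, δ, h1, h2, rfl⟩
  have hδ : δ ∈ linkOf K α := by rw [hlink]; exact h2
  exact hK _ hδ.2 _ (by rw [union_comm δ α]; exact union_subset_union h1 subset_rfl)

lemma joinBS_mem_of_mem {K : Set (Finset V)} (hK : IsSimplicialComplex K)
    {α β : Finset V} (hβ : β ∉ K) {S : Finset V} (hS : S ∈ joinBS α β) (hSK : S ∈ K) :
    S ∈ joinSB α β := by
  obtain ⟨γ, δ, h1, h2, rfl⟩ := hS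
  rcases eq_or_ne δ β with rfl | hne
  · exact absurd (hK _ hSK _ subset_union_right) hβ
  · exact ⟨γ, δ, h1.subset, ⟨h2, fun hc => hne (subset_antisymm h2 hc)⟩, rfl⟩

lemma fvec_bm_add (K : Set (Finset V)) (hK : IsSimplicialComplex K) (hfin : K.Finite)
    (α β : Finset V) (hβ : β ∉ K) (hlink : linkOf K α = bdry β) (i : ℕ) :
    fvec (bm K α β) i + (faceSet (joinSB α β) (i + 1)).ncard
      = fvec K i + (faceSet (joinBS α β) (i + 1)).ncard := by
  set X := faceSet K (i + 1) with hX
  set A := faceSet (joinSB α β) (i + 1) with hA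
  set B := faceSet (joinBS α β) (i + 1) with hB
  have hAX : A ⊆ X := fun S hS => ⟨joinSB_subset hK hlink hS.1, hS.2⟩
  have hXfin : X.Finite := hfin.subset (fun S hS => hS.1)
  have hjBfin : (joinBS α β).Finite := by
    rw [joinBS_eq_joinSB]; exact joinSB_finite β α
  have hBfin : B.Finite := hjBfin.subset (fun S hS => hS.1)
  have hbm : faceSet (bm K α β) (i + 1) = (X \ A) ∪ B := by
    ext S
    constructor
    · rintro ⟨hS1 | hS1, hS2⟩
      · exact Or.inl ⟨⟨hS1.1, hS2⟩, fun hSA => hS1.2 hSA.1⟩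
      · exact Or.inr ⟨hS1, hS2⟩
    · rintro (⟨hS1, hS2⟩ | hS1)
      · exact ⟨Or.inl ⟨hS1.1, fun hj => hS2 ⟨hj, hS1.2⟩⟩, hS1.2⟩
      · exact ⟨Or.inr hS1.1, hS1.2⟩
  have hdisj : Disjoint (X \ A) B := by
    rw [Set.disjoint_left]
    rintro S ⟨hSX, hSA⟩ hSB
    exact hSA ⟨joinBS_mem_of_mem hK hβ hSB.1 hSX.1, hSX.2⟩
  have h1 : fvec (bm K α β) i = (X \ A).ncard + B.ncard := by
    show (faceSet (bm K α β) (i + 1)).ncard = _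
    rw [hbm, Set.ncard_union_eq hdisj (hXfin.subset Set.diff_subset) hBfin]
  have h2 : (X \ A).ncard + A.ncard = X.ncard :=
    Set.ncard_diff_add_ncard_of_subset hAX hXfin
  have h3 : fvec K i = X.ncard := rfl
  omega

lemma faceSet_joinSB_top {α β : Finset V} (hd : α ∩ β = ∅) :
    faceSet (joinSB α β) (α.card + β.card - 1) = (fun x => α ∪ β.erase x) '' ↑β := by
  have hdisj : Disjoint α β := disjoint_iff_inter_eq_empty.2 hd
  ext S
  constructor
  · rintro ⟨⟨γ, δ, h1, h2, rfl⟩, hcard⟩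
    have hc1 : γ.card ≤ α.card := card_le_card h1
    have hc2 : δ.card < β.card := card_lt_card h2
    have hc3 : (γ ∪ δ).card ≤ γ.card + δ.card := card_union_le γ δ
    have hγ : γ.card = α.card := by omega
    have hδ : δ.card = β.card - 1 := by omega
    have hγα : γ = α := eq_of_subset_of_card_le h1 (le_of_eq hγ.symm)
    have h5 : (β \ δ).card = 1 := by
      rw [card_sdiff_of_subset h2.subset]; omega
    obtain ⟨x, hx⟩ := card_eq_one.1 h5
    have hxβ : x ∈ β := by
      have hm : x ∈ β \ δ := by rw [hx]; exact mem_singleton_self x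
      exact (mem_sdiff.1 hm).1
    refine ⟨x, hxβ, ?_⟩
    have hδe : β.erase x = δ := by
      rw [erase_eq, ← hx, sdiff_sdiff_self_left, inter_eq_right.mpr h2.subset]
    show α ∪ β.erase x = γ ∪ δ
    rw [hγα, hδe]
  · rintro ⟨x, hxβ, rfl⟩
    refine ⟨⟨α, β.erase x, subset_rfl, erase_ssubset hxβ, rfl⟩, ?_⟩
    have hβpos : 0 < β.card := card_pos.2 ⟨x, hxβ⟩
    rw [card_union_of_disjoint (hdisj.mono_right (erase_subset x β)),
      card_erase_of_mem hxβ]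
    omega

lemma ncard_faceSet_joinSB_top {α β : Finset V} (hd : α ∩ β = ∅) :
    (faceSet (joinSB α β) (α.card + β.card - 1)).ncard = β.card := by
  rw [faceSet_joinSB_top hd, Set.ncard_image_of_injOn, Set.ncard_coe_finset]
  intro x hx y hy hxy
  simp only [Finset.mem_coe] at hx hy
  dsimp only at hxy
  by_contra hne
  have hx' : x ∈ α ∪ β.erase y := mem_union_right _ (mem_erase.2 ⟨hne, hx⟩)
  rw [← hxy] at hx'
  rcases mem_union.1 hx' with hc | hc
  · have hm : x ∈ α ∩ β := mem_inter.2 ⟨hc, hx⟩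
    rw [hd] at hm
    exact notMem_empty x hm
  · exact (mem_erase.1 hc).1 rfl

lemma exists_involution {α β : Finset V} (hd : α ∩ β = ∅) (hc : α.card = β.card) :
    ∃ f : V → V, Function.Involutive f ∧ α.image f = β ∧ β.image f = α := by
  classical
  have hdisj : Disjoint α β := disjoint_iff_inter_eq_empty.2 hd
  have e : α ≃ β := Finset.equivOfCardEq hc
  set f : V → V := fun v =>
    if hv : v ∈ α then (e ⟨v, hv⟩ : V)
    else if hv : v ∈ β then ((e.symm ⟨v, hv⟩ : α) : V) else v with hf
  have hfα : ∀ v (hv : v ∈ α), f v = (e ⟨v, hv⟩ : V) := fun v hv => dif_pos hv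
  have hfβ : ∀ v (hv : v ∈ β), f v = ((e.symm ⟨v, hv⟩ : α) : V) := by
    intro v hv
    have hvα : v ∉ α := fun hvα => Finset.disjoint_left.mp hdisj hvα hv
    simp only [hf, dif_neg hvα, dif_pos hv]
  have hinv : Function.Involutive f := by
    intro v
    by_cases hv : v ∈ α
    · have h1 : f v = (e ⟨v, hv⟩ : V) := hfα v hv
      have h2 : f v ∈ β := h1 ▸ (e ⟨v, hv⟩).2
      rw [hfβ (f v) h2]
      have h3 : (⟨f v, h2⟩ : β) = e ⟨v, hv⟩ := Subtype.ext h1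
      rw [h3, Equiv.symm_apply_apply]
    · by_cases hv' : v ∈ β
      · have h1 : f v = ((e.symm ⟨v, hv'⟩ : α) : V) := hfβ v hv'
        have h2 : f v ∈ α := h1 ▸ (e.symm ⟨v, hv'⟩).2
        rw [hfα (f v) h2]
        have h3 : (⟨f v, h2⟩ : α) = e.symm ⟨v, hv'⟩ := Subtype.ext h1
        rw [h3, Equiv.apply_symm_apply]
      · have h1 : f v = v := by simp only [hf, dif_neg hv, dif_neg hv']
        rw [h1, h1]
  have finj : Function.Injective f := hinv.injective
  have himgα : α.image f = β := by
    apply eq_of_subset_of_card_le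
    · intro w hw
      obtain ⟨v, hv, rfl⟩ := Finset.mem_image.1 hw
      rw [hfα v hv]; exact (e ⟨v, hv⟩).2
    · rw [card_image_of_injective _ finj, hc]
  have himgβ : β.image f = α := by
    apply eq_of_subset_of_card_le
    · intro w hw
      obtain ⟨v, hv, rfl⟩ := Finset.mem_image.1 hw
      rw [hfβ v hv]; exact (e.symm ⟨v, hv⟩).2
    · rw [card_image_of_injective _ finj, hc]
  exact ⟨f, hinv, himgα, himgβ⟩

lemma ncard_faceSet_joinSB_eq {α β : Finset V} (hd : α ∩ β = ∅) (hc : α.card = β.card)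
    (c : ℕ) : (faceSet (joinSB α β) c).ncard = (faceSet (joinBS α β) c).ncard := by
  rw [joinBS_eq_joinSB]
  obtain ⟨f, hfi, hfα, hfβ⟩ := exists_involution hd hc
  have finj : Function.Injective f := hfi.injective
  have hff : f ∘ f = id := funext fun x => hfi x
  have hdouble : ∀ s : Finset V, (s.image f).image f = s := by
    intro s; rw [Finset.image_image, hff, Finset.image_id]
  have himgss : ∀ {s t : Finset V}, s ⊂ t → s.image f ⊂ t.image f := by
    intro s t hst
    rw [Finset.ssubset_def] at hst ⊢
    refine ⟨image_subset_image hst.1, fun hsub => hst.2 ?_⟩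
    calc t = (t.image f).image f := (hdouble t).symm
      _ ⊆ (s.image f).image f := image_subset_image hsub
      _ = s := hdouble s
  have key : ∀ (a b : Finset V), a.image f = b →
      ∀ S ∈ faceSet (joinSB a b) c, S.image f ∈ faceSet (joinSB b a) c := by
    rintro a b rfl S ⟨⟨γ, δ, h1, h2, rfl⟩, hcard⟩
    refine ⟨⟨γ.image f, δ.image f, image_subset_image h1, ?_, ?_⟩, ?_⟩
    · have hss := himgss h2
      rwa [hdouble a] at hss
    · rw [Finset.image_union]
    · rw [card_image_of_injective _ finj]; exact hcard
  have himg : (fun S : Finset V => S.image f) '' faceSet (joinSB α β) c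
      = faceSet (joinSB β α) c := by
    ext T
    constructor
    · rintro ⟨S, hS, rfl⟩
      exact key α β hfα S hS
    · intro hT
      refine ⟨T.image f, key β α hfβ T hT, hdouble T⟩
  have imginj : Function.Injective (fun S : Finset V => S.image f) := by
    intro S T hST
    have : (S.image f).image f = (T.image f).image f := by
      simp only at hST; rw [hST]
    rwa [hdouble, hdouble] at this
  rw [← himg, Set.ncard_image_of_injective _ imginj]

/-- the f-vector is unchanged by a bistellar `h`-move iff `n = 2h`. -/
theorem fvec_eq_iff (K : Set (Finset V)) (hK : IsSimplicialComplex K)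
    (hfin : K.Finite) (n h : ℕ) (hhn : h ≤ n)
    (hdim : ∀ S ∈ K, S.card ≤ n + 1) (α β : Finset V)
    (hpair : IsBistellarPair K n h α β) :
    (∀ i ≤ n, fvec (bm K α β) i = fvec K i) ↔ n = 2 * h := by
  obtain ⟨hαK, hαc, hβc, hd, hβK, hlink⟩ := hpair
  have hkey := fun i => fvec_bm_add K hK hfin α β hβK hlink i
  have hidx : α.card + β.card - 1 = n + 1 := by rw [hαc, hβc]; omega
  constructor
  · intro hall
    have hn := hall n le_rfl
    have h4 := hkey n
    have hA : (faceSet (joinSB α β) (n + 1)).ncard = h + 1 := by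
      have := ncard_faceSet_joinSB_top hd
      rw [hidx, hβc] at this
      exact this
    have hB : (faceSet (joinBS α β) (n + 1)).ncard = n - h + 1 := by
      have hd' : β ∩ α = ∅ := by rw [inter_comm]; exact hd
      have := ncard_faceSet_joinSB_top hd'
      rw [show β.card + α.card - 1 = n + 1 by omega, hαc] at this
      rw [joinBS_eq_joinSB]
      exact this
    omega
  · intro h2h i _
    have h4 := hkey i
    have h5 := ncard_faceSet_joinSB_eq hd (by rw [hαc, hβc]; omega) (i + 1)
    omega
end

section
/- Let n ≥ 1, let K be a finite simplicial complex on V all of whose faces have at most n + 1 elements, and let (α, β) be a bistellar pair of type h in K (viewed as n-dimensional). Then the following are equivalent: (1) f_i(bm_α K) = f_i(K) for every i ≤ n; (2) f_n(bm_α K) = f_n(K); (3) f_{n−1}(bm_α K) = f_{n−1}(K); (4) n = 2h. -/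
open Finset

variable {V : Type*} [DecidableEq V]

/-!
Put `σ = α ∪ β`, a set of `n + 2` vertices. The link condition makes the subsets of `σ`
lying in `K` exactly those not containing `β` (this is `α * ∂β`), and the move replaces them
by the subsets of `σ` not containing `α`. Passing to complements in `σ`, the `k`-subsets of `σ`
containing `β` are counted by `C(|α|, n + 2 - k)`, whence
`f_i(bm_α K) + C(h + 1, n + 1 - i) = f_i(K) + C(n - h + 1, n + 1 - i)`.
At `i = n` this says that `f_n` changes by `n - 2h`; at `i = n - 1` it compares `C(h + 1, 2)`
with `C(n - h + 1, 2)`, and `k ↦ C(k, 2)` is injective on `k ≥ 1`.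
-/

lemma Nat.choose_two_lt_choose_two {a b : ℕ} (ha : 1 ≤ a) (hab : a < b) :
    a.choose 2 < b.choose 2 :=
  calc a.choose 2 < a.choose 1 + a.choose 2 := by rw [Nat.choose_one_right]; omega
    _ = (a + 1).choose 2 := (Nat.choose_succ_succ' a 1).symm
    _ ≤ b.choose 2 := Nat.choose_le_choose 2 hab

lemma Nat.choose_two_inj {a b : ℕ} (ha : 1 ≤ a) (hb : 1 ≤ b) :
    a.choose 2 = b.choose 2 ↔ a = b := by
  refine ⟨fun hab => ?_, congrArg (Nat.choose · 2)⟩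
  rcases lt_trichotomy a b with h | h | h
  · exact absurd hab (Nat.choose_two_lt_choose_two ha h).ne
  · exact h
  · exact absurd hab (Nat.choose_two_lt_choose_two hb h).ne'

lemma Set.ncard_sdiff_union_add_ncard {X : Type*} {K A B : Set X} (hK : K.Finite)
    (hB : B.Finite) (hAK : A ⊆ K) (hBK : Disjoint B (K \ A)) :
    ((K \ A) ∪ B).ncard + A.ncard = K.ncard + B.ncard := by
  rw [Set.ncard_union_eq hBK.symm hK.sdiff hB, add_right_comm,
    Set.ncard_sdiff_add_ncard_of_subset hAK hK]

lemma ncard_faceSet_Icc {a s : Finset V} (has : a ⊆ s) {k : ℕ} (hk : k ≤ s.card) :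
    (faceSet (Set.Icc a s) k).ncard = (s \ a).card.choose (s.card - k) := by
  have hcompl : faceSet (Set.Icc a s) k
      = ↑(((s \ a).powersetCard (s.card - k)).image (s \ ·)) := by
    ext S
    simp only [faceSet, Set.mem_Icc, Set.mem_ofPred_eq, coe_image, Set.mem_image, mem_coe,
      mem_powersetCard]
    constructor
    · rintro ⟨⟨haS, hSs⟩, rfl⟩
      exact ⟨s \ S, ⟨sdiff_subset_sdiff subset_rfl haS, card_sdiff_of_subset hSs⟩,
        Finset.sdiff_sdiff_eq_self hSs⟩
    · rintro ⟨δ, ⟨hδ, hδcard⟩, rfl⟩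
      have hδs : δ ⊆ s := hδ.trans sdiff_subset
      refine ⟨⟨fun x hx => mem_sdiff.2 ⟨has hx, fun hxδ => (mem_sdiff.1 (hδ hxδ)).2 hx⟩,
        sdiff_subset⟩, ?_⟩
      rw [card_sdiff_of_subset hδs, hδcard]
      omega
  rw [hcompl, Set.ncard_coe_finset, card_image_of_injOn, card_powersetCard]
  intro x hx y hy hxy
  simp only [mem_coe, mem_powersetCard] at hx hy
  rw [← Finset.sdiff_sdiff_eq_self (hx.1.trans sdiff_subset),
    ← Finset.sdiff_sdiff_eq_self (hy.1.trans sdiff_subset)]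
  exact congrArg (s \ ·) hxy

lemma ncard_faceSet_not_superset_add_choose {s t : Finset V} (hts : t ⊆ s) {k : ℕ}
    (hk : k ≤ s.card) :
    (faceSet {S | S ⊆ s ∧ ¬ t ⊆ S} k).ncard + (s \ t).card.choose (s.card - k)
      = s.card.choose k := by
  have hsplit : faceSet {S | S ⊆ s ∧ ¬ t ⊆ S} k
      = ↑(s.powersetCard k) \ faceSet (Set.Icc t s) k := by
    ext S
    simp only [faceSet, Set.mem_Icc, Set.mem_ofPred_eq, Set.mem_sdiff, mem_coe,
      mem_powersetCard]
    tauto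
  have hIcc : faceSet (Set.Icc t s) k ⊆ ↑(s.powersetCard k) := fun S hS => by
    simpa only [mem_coe, mem_powersetCard] using And.intro hS.1.2 hS.2
  rw [hsplit, ← ncard_faceSet_Icc hts hk, Set.ncard_sdiff_add_ncard_of_subset hIcc,
    Set.ncard_coe_finset, card_powersetCard]

lemma joinSB_eq {α β : Finset V} (hαβ : Disjoint α β) :
    joinSB α β = {S | S ⊆ α ∪ β ∧ ¬ β ⊆ S} := by
  ext S
  constructor
  · rintro ⟨γ, δ, hγ, hδ, rfl⟩
    refine ⟨union_subset_union hγ hδ.subset, fun hβ => hδ.not_subset fun x hx => ?_⟩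
    exact (mem_union.1 (hβ hx)).resolve_left fun hxγ => disjoint_left.1 hαβ (hγ hxγ) hx
  · rintro ⟨hS, hβS⟩
    refine ⟨S ∩ α, S ∩ β, inter_subset_right,
      ssubset_of_subset_of_ne inter_subset_right fun h => hβS (h ▸ inter_subset_left), ?_⟩
    rw [← inter_union_distrib_left, inter_eq_left.2 hS]

lemma faceSet_bm (K : Set (Finset V)) (α β : Finset V) (k : ℕ) :
    faceSet (bm K α β) k
      = (faceSet K k \ faceSet (joinSB α β) k) ∪ faceSet (joinBS α β) k := by
  ext S
  simp only [faceSet, bm, Set.mem_ofPred_eq, Set.mem_union, Set.mem_sdiff]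
  tauto

namespace IsBistellarPair

variable {K : Set (Finset V)} {n h : ℕ} {α β : Finset V}

lemma disjoint (hp : IsBistellarPair K n h α β) : Disjoint α β :=
  let ⟨_, _, _, hαβ, _⟩ := hp
  disjoint_iff_inter_eq_empty.2 hαβ

lemma card_union (hp : IsBistellarPair K n h α β) (hhn : h ≤ n) : (α ∪ β).card = n + 2 := by
  rw [card_union_of_disjoint hp.disjoint]
  obtain ⟨-, hα, hβ, -⟩ := hp
  rw [hα, hβ]
  omega

lemma joinSB_subset (hK : IsSimplicialComplex K) (hp : IsBistellarPair K n h α β) :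
    joinSB α β ⊆ K := by
  obtain ⟨-, -, -, -, -, hlink⟩ := hp
  rintro _ ⟨γ, δ, hγ, hδ, rfl⟩
  have hδlink : δ ∈ linkOf K α := hlink ▸ hδ
  exact hK _ hδlink.2 _ (union_comm γ δ ▸ union_subset_union subset_rfl hγ)

lemma disjoint_joinBS (hK : IsSimplicialComplex K) (hp : IsBistellarPair K n h α β) :
    Disjoint (joinBS α β) (K \ joinSB α β) := by
  rw [Set.disjoint_left, joinBS_eq_joinSB, joinSB_eq hp.disjoint.symm, joinSB_eq hp.disjoint,
    union_comm β α]
  obtain ⟨-, -, -, -, hβK, -⟩ := hp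
  rintro S ⟨hSσ, -⟩ ⟨hSK, hSΛ⟩
  exact hSΛ ⟨hSσ, fun hβS => hβK (hK S hSK β hβS)⟩

theorem fvec_bm_add_choose (hK : IsSimplicialComplex K) (hfin : K.Finite) (hhn : h ≤ n)
    (hp : IsBistellarPair K n h α β) (i : ℕ) (hi : i ≤ n + 1) :
    fvec (bm K α β) i + (h + 1).choose (n + 1 - i)
      = fvec K i + (n - h + 1).choose (n + 1 - i) := by
  have hσ := hp.card_union hhn
  have hk : i + 1 ≤ (α ∪ β).card := by omega
  have hΛα := ncard_faceSet_not_superset_add_choose (subset_union_right (s₁ := α)) hk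
  have hΛβ := ncard_faceSet_not_superset_add_choose (subset_union_left (s₂ := β)) hk
  rw [← joinSB_eq hp.disjoint, union_sdiff_cancel_right hp.disjoint, hp.2.1, hσ] at hΛα
  rw [union_comm, ← joinSB_eq hp.disjoint.symm, ← joinBS_eq_joinSB, union_comm,
    union_sdiff_cancel_left hp.disjoint, hp.2.2.1, hσ] at hΛβ
  have hΛαK : faceSet (joinSB α β) (i + 1) ⊆ faceSet K (i + 1) := fun S hS =>
    ⟨hp.joinSB_subset hK hS.1, hS.2⟩
  have hΛβK : Disjoint (faceSet (joinBS α β) (i + 1))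
      (faceSet K (i + 1) \ faceSet (joinSB α β) (i + 1)) :=
    (hp.disjoint_joinBS hK).mono (Set.sep_subset _ _) fun S hS =>
      (Set.mem_sdiff _).2 ⟨hS.1.1, fun hSΛ => hS.2 ⟨hSΛ, hS.1.2⟩⟩
  have hswap := Set.ncard_sdiff_union_add_ncard (K := faceSet K (i + 1))
    (hfin.subset (Set.sep_subset K _))
    ((joinSB_finite β α).subset fun S hS => by rw [← joinBS_eq_joinSB]; exact hS.1)
    hΛαK hΛβK
  rw [← faceSet_bm] at hswap
  rw [show n + 2 - (i + 1) = n + 1 - i by omega] at hΛα hΛβ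
  change (faceSet (bm K α β) (i + 1)).ncard + _ = (faceSet K (i + 1)).ncard + _
  omega

end IsBistellarPair

theorem fvec_tfae_general (K : Set (Finset V)) (hK : IsSimplicialComplex K)
    (hfin : K.Finite) (n h : ℕ) (hn : 1 ≤ n) (hhn : h ≤ n)
    (α β : Finset V)
    (hpair : IsBistellarPair K n h α β) :
    [(∀ i ≤ n, fvec (bm K α β) i = fvec K i),
     fvec (bm K α β) n = fvec K n,
     fvec (bm K α β) (n - 1) = fvec K (n - 1),
     n = 2 * h].TFAE := by
  have hcount := hpair.fvec_bm_add_choose hK hfin hhn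
  have hfacet := hcount n (by omega)
  have hridge := hcount (n - 1) (by omega)
  rw [Nat.add_sub_cancel_left, Nat.choose_one_right, Nat.choose_one_right] at hfacet
  rw [show n + 1 - (n - 1) = 2 by omega] at hridge
  tfae_have 1 → 2 := fun H => H n le_rfl
  tfae_have 2 ↔ 4 := by omega
  tfae_have 3 ↔ 4 := by
    have := Nat.choose_two_inj (a := h + 1) (b := n - h + 1) (by omega) (by omega)
    omega
  tfae_have 4 → 1 := fun h4 i hi => by
    have := hcount i (by omega)
    rw [show n - h + 1 = h + 1 by omega] at this
    omega
  tfae_finish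

/-- equivalent characterizations of `n = 2h` via the f-vector. -/
theorem fvec_tfae (K : Set (Finset V)) (hK : IsSimplicialComplex K)
    (hfin : K.Finite) (n h : ℕ) (hn : 1 ≤ n) (hhn : h ≤ n)
    (hdim : ∀ S ∈ K, S.card ≤ n + 1) (α β : Finset V)
    (hpair : IsBistellarPair K n h α β) :
    [(∀ i ≤ n, fvec (bm K α β) i = fvec K i),
     fvec (bm K α β) n = fvec K n,
     fvec (bm K α β) (n - 1) = fvec K (n - 1),
     n = 2 * h].TFAE :=
  fvec_tfae_general K hK hfin n h hn hhn α β hpair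
end

section
/- Let n ≥ 1, h ≤ n, and let α, β be disjoint finsets of V with α.card = n − h + 1 and β.card = h + 1. Then the complexes Λ_α := α * ∂β and Λ_β := ∂α * β are combinatorially equivalent if and only if n = 2h, where combinatorial equivalence means: there exists a bijection e from the vertex set {v : {v} ∈ Λ_α} of Λ_α onto the vertex set {v : {v} ∈ Λ_β} of Λ_β such that for every finset S of vertices of Λ_α, S ∈ Λ_α if and only if the image finset e(S) ∈ Λ_β. -/
open Finset

variable {V : Type*} [DecidableEq V]

lemma mem_joinSB_iff {α β : Finset V} (hdisj : α ∩ β = ∅) (S : Finset V) :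
    S ∈ joinSB α β ↔ S ⊆ α ∪ β ∧ ¬ β ⊆ S := by
  constructor
  · rintro ⟨γ, δ, hγ, hδ, rfl⟩
    refine ⟨union_subset_union hγ hδ.subset, fun hb => ?_⟩
    have hβδ : β ⊆ δ := by
      intro b hbm
      rcases mem_union.1 (hb hbm) with h' | h'
      · exact absurd (mem_inter.2 ⟨hγ h', hbm⟩) (by simp [hdisj])
      · exact h'
    exact (lt_of_lt_of_le hδ hβδ).false
  · rintro ⟨hsub, hns⟩
    refine ⟨S ∩ α, S ∩ β, inter_subset_right, ?_, ?_⟩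
    · refine ssubset_of_subset_of_ne inter_subset_right (fun h => hns ?_)
      rw [← h]; exact inter_subset_left
    · rw [← inter_union_distrib_left]
      exact (inter_eq_left.2 hsub).symm

lemma mem_joinBS_iff {α β : Finset V} (hdisj : α ∩ β = ∅) (S : Finset V) :
    S ∈ joinBS α β ↔ S ⊆ α ∪ β ∧ ¬ α ⊆ S := by
  rw [joinBS_eq_joinSB, mem_joinSB_iff (by rwa [inter_comm]), union_comm]

lemma vertexSB_eq {α β : Finset V} (hdisj : α ∩ β = ∅) (hβ : 2 ≤ β.card) :
    {v | ({v} : Finset V) ∈ joinSB α β} = ↑(α ∪ β) := by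
  ext v
  simp only [Set.mem_setOf_eq, mem_joinSB_iff hdisj, singleton_subset_iff, mem_coe]
  refine ⟨fun h => h.1, fun h => ⟨h, fun hc => ?_⟩⟩
  have := card_le_card hc
  simp at this
  omega

lemma vertexSB_eq_one {α β : Finset V} (hdisj : α ∩ β = ∅) (hβ : β.card = 1) :
    {v | ({v} : Finset V) ∈ joinSB α β} = ↑α := by
  obtain ⟨b, rfl⟩ := card_eq_one.1 hβ
  ext v
  simp only [Set.mem_setOf_eq, mem_joinSB_iff hdisj, singleton_subset_iff, mem_coe,
    mem_union, mem_singleton, Finset.singleton_subset_iff]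
  constructor
  · rintro ⟨hv | hv, hne⟩
    · exact hv
    · exact absurd hv.symm (by simpa using hne)
  · intro hv
    refine ⟨Or.inl hv, fun hc => ?_⟩
    have : b = v := by simpa using hc
    subst this
    exact absurd (mem_inter.2 ⟨hv, mem_singleton_self b⟩) (by simp [hdisj])

/-- `Λ_α` and `Λ_β` are combinatorially equivalent iff `n = 2h`. -/
theorem join_combinatorially_equivalent_iff (n h : ℕ) (hn : 1 ≤ n) (hhn : h ≤ n)
    (α β : Finset V) (hdisj : α ∩ β = ∅)
    (hα : α.card = n - h + 1) (hβ : β.card = h + 1) :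
    (∃ e : V → V,
      Set.BijOn e {v | ({v} : Finset V) ∈ joinSB α β}
        {v | ({v} : Finset V) ∈ joinBS α β} ∧
      ∀ S : Finset V, (↑S : Set V) ⊆ {v | ({v} : Finset V) ∈ joinSB α β} →
        (S ∈ joinSB α β ↔ S.image e ∈ joinBS α β)) ↔ n = 2 * h := by
  have hd : Disjoint α β := disjoint_iff_inter_eq_empty.2 hdisj
  have hdisj' : β ∩ α = ∅ := by rwa [inter_comm]
  have hcardu : (α ∪ β).card = α.card + β.card := card_union_of_disjoint hd
  constructor
  · rintro ⟨e, hbij, hface⟩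
    rcases Nat.eq_zero_or_pos h with h0 | h1
    · -- h = 0 : derive a contradiction
      exfalso
      subst h0
      have e1 : {v | ({v} : Finset V) ∈ joinSB α β} = ↑α := vertexSB_eq_one hdisj hβ
      have e2 : {v | ({v} : Finset V) ∈ joinBS α β} = ↑(α ∪ β) := by
        rw [joinBS_eq_joinSB, vertexSB_eq hdisj' (by omega), union_comm β α]
      rw [e1, e2] at hbij
      have himg : ((α.image e : Finset V) : Set V) = ↑(α ∪ β) := by
        rw [coe_image]; exact hbij.image_eq
      have hcard := congrArg Finset.card (coe_injective himg)
      rw [card_image_of_injOn hbij.injOn] at hcard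
      omega
    by_cases hn2 : h = n
    · -- h = n : derive a contradiction
      exfalso
      subst hn2
      have hα1 : α.card = 1 := by omega
      have e1 : {v | ({v} : Finset V) ∈ joinSB α β} = ↑(α ∪ β) :=
        vertexSB_eq hdisj (by omega)
      have e2 : {v | ({v} : Finset V) ∈ joinBS α β} = ↑β := by
        rw [joinBS_eq_joinSB]
        exact vertexSB_eq_one hdisj' hα1
      rw [e1, e2] at hbij
      have himg : (((α ∪ β).image e : Finset V) : Set V) = ↑β := by
        rw [coe_image]; exact hbij.image_eq
      have hcard := congrArg Finset.card (coe_injective himg)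
      rw [card_image_of_injOn hbij.injOn] at hcard
      omega
    -- main case : 1 ≤ h < n
    have hlt : h < n := lt_of_le_of_ne hhn hn2
    have e1 : {v | ({v} : Finset V) ∈ joinSB α β} = ↑(α ∪ β) :=
      vertexSB_eq hdisj (by omega)
    have e2 : {v | ({v} : Finset V) ∈ joinBS α β} = ↑(α ∪ β) := by
      rw [joinBS_eq_joinSB, vertexSB_eq hdisj' (by omega), union_comm β α]
    rw [e1, e2] at hbij
    rw [e1] at hface
    -- inequality 1 : α.card ≤ β.card
    have hβmem : β ∉ joinSB α β := fun hc => ((mem_joinSB_iff hdisj β).1 hc).2 Subset.rfl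
    have himg1 : β.image e ∉ joinBS α β := fun hc =>
      hβmem ((hface β (by exact_mod_cast (subset_union_right : β ⊆ α ∪ β))).2 hc)
    have hsub1 : β.image e ⊆ α ∪ β := by
      intro x hx
      obtain ⟨b, hb, rfl⟩ := mem_image.1 hx
      exact_mod_cast hbij.mapsTo (by exact_mod_cast mem_union_right α hb)
    have hαs : α ⊆ β.image e := by
      by_contra hc
      exact himg1 ((mem_joinBS_iff hdisj _).2 ⟨hsub1, hc⟩)
    have i1 : α.card ≤ β.card :=
      le_trans (card_le_card hαs) (card_image_le)
    -- inequality 2 : β.card ≤ α.card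
    set S : Finset V := (α ∪ β).filter (fun v => e v ∈ α) with hSdef
    have hSsub : S ⊆ α ∪ β := filter_subset _ _
    have hSimg : S.image e = α := by
      apply Subset.antisymm
      · intro x hx
        obtain ⟨v, hv, rfl⟩ := mem_image.1 hx
        exact (mem_filter.1 hv).2
      · intro a ha
        obtain ⟨v, hv, hev⟩ := hbij.surjOn
          (show (a : V) ∈ (↑(α ∪ β) : Set V) from by exact_mod_cast mem_union_left β ha)
        exact mem_image.2 ⟨v, mem_filter.2 ⟨by exact_mod_cast hv, by rw [hev]; exact ha⟩, hev⟩
    have hαnot : α ∉ joinBS α β := fun hc => ((mem_joinBS_iff hdisj α).1 hc).2 Subset.rfl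
    have hSnot : S ∉ joinSB α β := fun hc =>
      hαnot (hSimg ▸ (hface S (by exact_mod_cast hSsub)).1 hc)
    have hβS : β ⊆ S := by
      by_contra hc
      exact hSnot ((mem_joinSB_iff hdisj S).2 ⟨hSsub, hc⟩)
    have i2a : β.card ≤ S.card := card_le_card hβS
    have i2b : α.card = S.card := by
      rw [← hSimg]
      exact card_image_of_injOn (hbij.injOn.mono (by exact_mod_cast hSsub))
    omega
  · intro hn2
    have h1 : 1 ≤ h := by omega
    have hlt : h < n := by omega
    have hcard : α.card = β.card := by omega
    have hab : ∀ v ∈ α, v ∉ β := fun v hv hv' =>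
      absurd (mem_inter.2 ⟨hv, hv'⟩) (by simp [hdisj])
    let f : {x // x ∈ α} ≃ {x // x ∈ β} := Finset.equivOfCardEq hcard
    set e : V → V := fun v =>
      if hv : v ∈ α then (f ⟨v, hv⟩ : V)
      else if hv' : v ∈ β then (f.symm ⟨v, hv'⟩ : V) else v with he
    have heα : ∀ v (hv : v ∈ α), e v = (f ⟨v, hv⟩ : V) := fun v hv => by
      simp only [he]; rw [dif_pos hv]
    have heβ : ∀ v (hv : v ∈ β), e v = (f.symm ⟨v, hv⟩ : V) := fun v hv => by
      simp only [he]
      rw [dif_neg (fun hc => hab v hc hv), dif_pos hv]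
    have hmapα : ∀ v (hv : v ∈ α), e v ∈ β := fun v hv => by
      rw [heα v hv]; exact coe_mem _
    have hmapβ : ∀ v (hv : v ∈ β), e v ∈ α := fun v hv => by
      rw [heβ v hv]; exact coe_mem _
    have hinv : ∀ v ∈ α ∪ β, e (e v) = v := by
      intro v hv
      rcases mem_union.1 hv with hv' | hv'
      · rw [heα v hv', heβ _ (coe_mem _)]
        simp
      · rw [heβ v hv', heα _ (coe_mem _)]
        simp
    have e1 : {v | ({v} : Finset V) ∈ joinSB α β} = ↑(α ∪ β) :=
      vertexSB_eq hdisj (by omega)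
    have e2 : {v | ({v} : Finset V) ∈ joinBS α β} = ↑(α ∪ β) := by
      rw [joinBS_eq_joinSB, vertexSB_eq hdisj' (by omega), union_comm β α]
    refine ⟨e, ?_, ?_⟩
    · rw [e1, e2]
      have hmaps : Set.MapsTo e ↑(α ∪ β) ↑(α ∪ β) := by
        intro v hv
        rcases mem_union.1 (by exact_mod_cast hv) with hv' | hv'
        · exact_mod_cast mem_union_right α (hmapα v hv')
        · exact_mod_cast mem_union_left β (hmapβ v hv')
      exact Set.InvOn.bijOn
        ⟨fun v hv => hinv v (by exact_mod_cast hv), fun v hv => hinv v (by exact_mod_cast hv)⟩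
        hmaps hmaps
    · intro S hS
      rw [e1] at hS
      have hSsub : S ⊆ α ∪ β := by exact_mod_cast hS
      have hSimgsub : S.image e ⊆ α ∪ β := by
        intro x hx
        obtain ⟨v, hv, rfl⟩ := mem_image.1 hx
        rcases mem_union.1 (hSsub hv) with hv' | hv'
        · exact mem_union_right α (hmapα v hv')
        · exact mem_union_left β (hmapβ v hv')
      rw [mem_joinSB_iff hdisj, mem_joinBS_iff hdisj]
      simp only [hSsub, hSimgsub, true_and]
      rw [not_iff_not]
      constructor
      · intro hβS a ha
        refine mem_image.2 ⟨(f ⟨a, ha⟩ : V), hβS (coe_mem _), ?_⟩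
        rw [heβ _ (coe_mem _)]
        simp
      · intro hαS b hb
        have hmem : (f.symm ⟨b, hb⟩ : V) ∈ S.image e := hαS (coe_mem _)
        obtain ⟨s, hs, hes⟩ := mem_image.1 hmem
        rcases mem_union.1 (hSsub hs) with hs' | hs'
        · exact absurd (hes ▸ hmapα s hs') (hab _ (coe_mem _))
        · rw [heβ s hs'] at hes
          have hsb : s = b :=
            congrArg Subtype.val (f.symm.injective (Subtype.coe_injective hes))
          rwa [← hsb]
end

section
/- Let h ≥ 1, n = 2h, and let α, β be disjoint finsets of V with α.card = β.card = h + 1. Then D_α = {(α ∪ β) \ {v, w} : v, w ∈ β, v ≠ w} and D_β = {(α ∪ β) \ {v, w} : v, w ∈ α, v ≠ w}; moreover D_α ∩ D_β = ∅ and both D_α and D_β have cardinality (h + 1) choose 2. -/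
open Finset

variable {V : Type*} [DecidableEq V]

lemma swap' (a b : Finset V) : joinBS a b = joinSB b a := by
  ext S
  constructor
  · rintro ⟨γ, δ, h1, h2, rfl⟩
    exact ⟨δ, γ, h2, h1, union_comm _ _⟩
  · rintro ⟨γ, δ, h1, h2, rfl⟩
    exact ⟨δ, γ, h2, h1, union_comm _ _⟩

lemma key' (h : ℕ) (hh : 1 ≤ h) (a b : Finset V) (hd : Disjoint a b)
    (ha : a.card = h + 1) (hb : b.card = h + 1) :
    {S ∈ joinSB a b | S.card = 2 * h} \ {S ∈ joinBS a b | S.card = 2 * h}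
      = {f | ∃ v ∈ b, ∃ w ∈ b, v ≠ w ∧ f = (a ∪ b) \ {v, w}} := by
  ext S
  constructor
  · rintro ⟨⟨⟨γ, δ, hγ, hδ, rfl⟩, hcard⟩, hnot⟩
    have hdisj : Disjoint γ δ := hd.mono hγ hδ.subset
    have hcards : γ.card + δ.card = 2 * h := by
      rw [← card_union_of_disjoint hdisj]; exact hcard
    have hγcard : γ.card = h + 1 := by
      by_contra hne
      have hlt : γ.card < a.card := by
        have := card_le_card hγ
        omega
      exact hnot ⟨⟨γ, δ, ssubset_of_subset_of_ne hγ (fun he => by simp [he] at hlt),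
        hδ.subset, rfl⟩, hcard⟩
    have hγa : γ = a := eq_of_subset_of_card_le hγ (by omega)
    subst hγa
    have hδcard : δ.card = h - 1 := by omega
    have h2 : (b \ δ).card = 2 := by
      rw [card_sdiff_of_subset hδ.subset]; omega
    obtain ⟨v, w, hvw, hset⟩ := card_eq_two.mp h2
    have hv : v ∈ b := (mem_sdiff.mp (hset ▸ mem_insert_self v {w})).1
    have hw : w ∈ b := (mem_sdiff.mp (hset ▸ (by simp : w ∈ ({v, w} : Finset V)))).1
    refine ⟨v, hv, w, hw, hvw, ?_⟩
    have hδeq : δ = b \ {v, w} := by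
      rw [← hset, Finset.sdiff_sdiff_eq_self hδ.subset]
    rw [hδeq, union_sdiff_distrib]
    congr 1
    refine (Finset.sdiff_eq_self_iff_disjoint.mpr ?_).symm
    exact hd.mono_right (by intro x hx; rcases mem_insert.mp hx with rfl | hx; exact hv; simp at hx; exact hx ▸ hw)
  · rintro ⟨v, hv, w, hw, hvw, rfl⟩
    have hsub : ({v, w} : Finset V) ⊆ b := by
      intro x hx; rcases mem_insert.mp hx with rfl | hx; exact hv; simp at hx; exact hx ▸ hw
    have hda : Disjoint a ({v, w} : Finset V) := hd.mono_right hsub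
    have heq : (a ∪ b) \ {v, w} = a ∪ (b \ {v, w}) := by
      rw [union_sdiff_distrib, Finset.sdiff_eq_self_iff_disjoint.mpr hda]
    have hcard2 : ({v, w} : Finset V).card = 2 := card_pair hvw
    have hcard : ((a ∪ b) \ {v, w}).card = 2 * h := by
      rw [card_sdiff_of_subset (hsub.trans subset_union_right),
        card_union_of_disjoint hd, ha, hb, hcard2]
      omega
    refine ⟨⟨⟨a, b \ {v, w}, subset_rfl, ?_, heq⟩, hcard⟩, ?_⟩
    · exact sdiff_ssubset hsub (by simp)
    · rintro ⟨⟨γ, δ, hγ, hδ, hEq⟩, -⟩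
      have haγ : a ⊆ γ := by
        intro x hx
        have hxS : x ∈ (a ∪ b) \ {v, w} := by
          rw [heq]; exact mem_union_left _ hx
        rw [hEq] at hxS
        rcases mem_union.mp hxS with h1 | h1
        · exact h1
        · exact absurd (hδ h1) (fun hxb => disjoint_left.mp hd hx hxb)
      exact hγ.2 haγ

lemma cardkey' (h : ℕ) (a b : Finset V) (hd : Disjoint a b) (hb : b.card = h + 1) :
    {f | ∃ v ∈ b, ∃ w ∈ b, v ≠ w ∧ f = (a ∪ b) \ {v, w}}.ncard = (h + 1).choose 2 := by
  have hset : {f | ∃ v ∈ b, ∃ w ∈ b, v ≠ w ∧ f = (a ∪ b) \ {v, w}}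
      = ↑((b.powersetCard 2).image fun p => (a ∪ b) \ p) := by
    ext f
    simp only [Set.mem_setOf_eq, coe_image, Set.mem_image, mem_coe, mem_powersetCard]
    constructor
    · rintro ⟨v, hv, w, hw, hvw, rfl⟩
      refine ⟨{v, w}, ⟨?_, card_pair hvw⟩, rfl⟩
      intro x hx
      rcases mem_insert.mp hx with rfl | hx
      · exact hv
      · simp at hx; exact hx ▸ hw
    · rintro ⟨p, ⟨hpb, hp2⟩, rfl⟩
      obtain ⟨v, w, hvw, rfl⟩ := card_eq_two.mp hp2
      exact ⟨v, hpb (by simp), w, hpb (by simp), hvw, rfl⟩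
  rw [hset, Set.ncard_coe_finset, card_image_of_injOn, card_powersetCard, hb]
  intro p hp q hq hpq
  simp only [mem_coe, mem_powersetCard] at hp hq
  have hpab : p ⊆ a ∪ b := hp.1.trans subset_union_right
  have hqab : q ⊆ a ∪ b := hq.1.trans subset_union_right
  simp only at hpq
  rw [← Finset.sdiff_sdiff_eq_self hpab, hpq, Finset.sdiff_sdiff_eq_self hqab]

/-- explicit description of `D_α` and `D_β`, their disjointness,
and their cardinality `(h+1).choose 2`. -/
theorem D_sets_description (h n : ℕ) (hh : 1 ≤ h) (hn : n = 2 * h)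
    (α β : Finset V) (hdisj : α ∩ β = ∅)
    (hα : α.card = h + 1) (hβ : β.card = h + 1) :
    faceSet (joinSB α β) n \ faceSet (joinBS α β) n
      = {f | ∃ v ∈ β, ∃ w ∈ β, v ≠ w ∧ f = (α ∪ β) \ {v, w}} ∧
    faceSet (joinBS α β) n \ faceSet (joinSB α β) n
      = {f | ∃ v ∈ α, ∃ w ∈ α, v ≠ w ∧ f = (α ∪ β) \ {v, w}} ∧
    (faceSet (joinSB α β) n \ faceSet (joinBS α β) n) ∩
      (faceSet (joinBS α β) n \ faceSet (joinSB α β) n) = ∅ ∧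
    (faceSet (joinSB α β) n \ faceSet (joinBS α β) n).ncard = (h + 1).choose 2 ∧
    (faceSet (joinBS α β) n \ faceSet (joinSB α β) n).ncard = (h + 1).choose 2 := by
  subst hn
  have hd : Disjoint α β := disjoint_iff_inter_eq_empty.mpr hdisj
  have hd' : Disjoint β α := hd.symm
  have eA : faceSet (joinSB α β) (2 * h) \ faceSet (joinBS α β) (2 * h)
      = {f | ∃ v ∈ β, ∃ w ∈ β, v ≠ w ∧ f = (α ∪ β) \ {v, w}} :=
    key' h hh α β hd hα hβ
  have eB : faceSet (joinBS α β) (2 * h) \ faceSet (joinSB α β) (2 * h)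
      = {f | ∃ v ∈ α, ∃ w ∈ α, v ≠ w ∧ f = (α ∪ β) \ {v, w}} := by
    have := key' h hh β α hd' hβ hα
    rw [swap' α β, ← swap' β α, union_comm α β]
    exact this
  refine ⟨eA, eB, ?_, ?_, ?_⟩
  · apply Set.eq_empty_iff_forall_notMem.mpr
    intro x hx
    simp only [Set.mem_inter_iff, Set.mem_diff] at hx
    tauto
  · rw [eA]; exact cardkey' h α β hd hβ
  · rw [eB, union_comm α β]; exact cardkey' h β α hd' hα
end

section
/- Let K be a simplicial complex on V and let (α, β) be a bistellar pair of type h in K (viewed as n-dimensional). Then the bistellar move only changes Λ_α into Λ_β: Λ_α ⊆ K, K ∩ Λ_β = Λ_α ∩ Λ_β, Λ_β ⊆ bm_α K, and K \ Λ_α = (bm_α K) \ Λ_β. -/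
open Finset

variable {V : Type*} [DecidableEq V]

/-- the bistellar move only changes `Λ_α` into `Λ_β`. -/
theorem bm_local_change (K : Set (Finset V)) (hK : IsSimplicialComplex K)
    (n h : ℕ) (hhn : h ≤ n) (α β : Finset V)
    (hpair : IsBistellarPair K n h α β) :
    joinSB α β ⊆ K ∧
    K ∩ joinBS α β = joinSB α β ∩ joinBS α β ∧
    joinBS α β ⊆ bm K α β ∧
    K \ joinSB α β = bm K α β \ joinBS α β := by
  obtain ⟨hαK, hcα, hcβ, hdisj, hβK, hlink⟩ := hpair
  have h1 : joinSB α β ⊆ K := by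
    rintro S ⟨γ, δ, hγ, hδ, rfl⟩
    have hδl : δ ∈ linkOf K α := hlink ▸ hδ
    refine hK _ hδl.2 _ ?_
    intro x hx
    rcases Finset.mem_union.mp hx with hx | hx
    · exact Finset.mem_union_right _ (hγ hx)
    · exact Finset.mem_union_left _ hx
  have hβnot : ∀ S ∈ K, ¬ β ⊆ S := fun S hS hsub => hβK (hK _ hS _ hsub)
  have hkey : ∀ S ∈ K, S ∈ joinBS α β → S ∈ joinSB α β := by
    rintro S hS ⟨γ, δ, hγ, hδ, rfl⟩
    refine ⟨(γ ∪ δ) ∩ α, (γ ∪ δ) ∩ β, Finset.inter_subset_right, ?_, ?_⟩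
    · refine ⟨Finset.inter_subset_right, fun hc => ?_⟩
      exact hβnot _ hS (fun x hx => Finset.mem_inter.mp (hc hx) |>.1)
    · ext x
      simp only [Finset.mem_union, Finset.mem_inter]
      constructor
      · rintro (hx | hx)
        · exact Or.inl ⟨Or.inl hx, hγ.1 hx⟩
        · exact Or.inr ⟨Or.inr hx, hδ hx⟩
      · rintro (⟨hx, _⟩ | ⟨hx, _⟩) <;> exact hx
  have h2 : K ∩ joinBS α β = joinSB α β ∩ joinBS α β := by
    ext S
    exact ⟨fun ⟨hS, hS'⟩ => ⟨hkey S hS hS', hS'⟩, fun ⟨hS, hS'⟩ => ⟨h1 hS, hS'⟩⟩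
  refine ⟨h1, h2, fun S hS => Or.inr hS, ?_⟩
  ext S
  constructor
  · rintro ⟨hS, hS'⟩
    refine ⟨Or.inl ⟨hS, hS'⟩, fun hc => hS' (hkey S hS hc)⟩
  · rintro ⟨hS, hS'⟩
    rcases hS with ⟨hS, hS2⟩ | hS
    · exact ⟨hS, hS2⟩
    · exact absurd hS hS'
end

section
/- Let K be a simplicial complex on V, let (α, β) be a bistellar pair of type h in K (viewed as n-dimensional), let v, w ∈ β with v ≠ w, and set f := (α ∪ β) \ {v, w}. If F ∈ K with F.card = n + 1 and f ⊆ F, then F = (α ∪ β) \ {v} or F = (α ∪ β) \ {w}. In particular, every n-dimensional face of K containing a member of D_α contains α. -/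
open Finset

variable {V : Type*} [DecidableEq V]

/-- the only top-dimensional faces of `K` containing
`(α ∪ β) \ {v, w}` (for `v ≠ w` in `β`) are `(α ∪ β) \ {v}` and `(α ∪ β) \ {w}`;
in particular every `n`-dimensional face of `K` containing a member of `D_α`
contains `α`. -/
theorem faces_containing_D (K : Set (Finset V)) (hK : IsSimplicialComplex K)
    (n h : ℕ) (hhn : h ≤ n) (α β : Finset V)
    (hpair : IsBistellarPair K n h α β)
    (v w : V) (hv : v ∈ β) (hw : w ∈ β) (hvw : v ≠ w) :
    (∀ F ∈ K, F.card = n + 1 → (α ∪ β) \ {v, w} ⊆ F →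
      F = (α ∪ β) \ {v} ∨ F = (α ∪ β) \ {w}) ∧
    (∀ F ∈ K, F.card = n + 1 →
      (∃ f, (∃ v' ∈ β, ∃ w' ∈ β, v' ≠ w' ∧ f = (α ∪ β) \ {v', w'}) ∧ f ⊆ F) →
      α ⊆ F) := by
  obtain ⟨hαK, hcardα, hcardβ, hαβ, hβK, hlink⟩ := hpair
  have hdisj : Disjoint α β := Finset.disjoint_iff_inter_eq_empty.mpr hαβ
  have key : ∀ (v' w' : V), v' ∈ β → w' ∈ β → α ⊆ (α ∪ β) \ {v', w'} := by
    intro v' w' hv' hw' x hx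
    simp only [Finset.mem_sdiff, Finset.mem_union, Finset.mem_insert, Finset.mem_singleton]
    refine ⟨Or.inl hx, ?_⟩
    rintro (rfl | rfl)
    · exact (Finset.disjoint_left.mp hdisj hx) hv'
    · exact (Finset.disjoint_left.mp hdisj hx) hw'
  constructor
  · intro F hF hcardF hsub
    have hαF : α ⊆ F := (key v w hv hw).trans hsub
    have hlinkF : F \ α ∈ linkOf K α := by
      refine ⟨Finset.sdiff_inter_self α F, ?_⟩
      rwa [Finset.sdiff_union_of_subset hαF]
    rw [hlink] at hlinkF
    have hssub : F \ α ⊂ β := hlinkF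
    have hcardFA : (F \ α).card = h := by
      have := Finset.card_sdiff_of_subset hαF
      omega
    obtain ⟨u, hu, hunot⟩ := Finset.exists_of_ssubset hssub
    have hFAsub : F \ α ⊆ β \ {u} := fun x hx => by
      simp only [Finset.mem_sdiff, Finset.mem_singleton]
      exact ⟨hssub.subset hx, fun h' => hunot (h' ▸ hx)⟩
    have hFAeq : F \ α = β \ {u} := Finset.eq_of_subset_of_card_le hFAsub (by
      rw [Finset.card_sdiff_of_subset (Finset.singleton_subset_iff.mpr hu), Finset.card_singleton]
      omega)
    have hβvw : β \ {v, w} ⊆ F \ α := by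
      intro x hx
      simp only [Finset.mem_sdiff, Finset.mem_insert, Finset.mem_singleton] at hx
      push_neg at hx
      have hxF : x ∈ F := hsub (by
        simp only [Finset.mem_sdiff, Finset.mem_union, Finset.mem_insert, Finset.mem_singleton]
        exact ⟨Or.inr hx.1, fun h' => h'.elim hx.2.1 hx.2.2⟩)
      simp only [Finset.mem_sdiff]
      exact ⟨hxF, Finset.disjoint_right.mp hdisj hx.1⟩
    have huvw : u = v ∨ u = w := by
      by_contra hcon
      push_neg at hcon
      exact hunot (hβvw (by
        simp only [Finset.mem_sdiff, Finset.mem_insert, Finset.mem_singleton]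
        exact ⟨hu, fun h' => h'.elim hcon.1 hcon.2⟩))
    have hFeq : F = (α ∪ β) \ {u} := by
      have h1 : F = α ∪ (F \ α) := (Finset.union_sdiff_of_subset hαF).symm
      rw [h1, hFAeq]
      ext x
      simp only [Finset.mem_union, Finset.mem_sdiff, Finset.mem_singleton]
      constructor
      · rintro (hx | ⟨hx, hx'⟩)
        · exact ⟨Or.inl hx, fun h' => Finset.disjoint_left.mp hdisj hx (h' ▸ hu)⟩
        · exact ⟨Or.inr hx, hx'⟩
      · rintro ⟨hx | hx, hx'⟩
        · exact Or.inl hx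
        · exact Or.inr ⟨hx, hx'⟩
    rcases huvw with rfl | rfl
    · exact Or.inl hFeq
    · exact Or.inr hFeq
  · rintro F hF hcardF ⟨f, ⟨v', hv', w', hw', hne, rfl⟩, hfF⟩
    exact (key v' w' hv' hw').trans hfF
end

section
/- Let h ≥ 1, n = 2h, let K be a simplicial complex on V, and let (α, β) and (α', β') be two bistellar pairs of type h in K (viewed as n-dimensional) with (α, β) ≠ (α', β'). Then D_α ∩ D_{α'} = ∅, where D_α := {(α ∪ β) \ {v, w} : v, w ∈ β, v ≠ w} and D_{α'} := {(α' ∪ β') \ {v, w} : v, w ∈ β', v ≠ w}. -/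
open Finset

variable {V : Type*} [DecidableEq V]

/-- Auxiliary: if `f` is a common member of the two `D`-sets, then the removed
vertex `v` of the first pair must be one of the removed vertices of the second. -/
lemma mem_pair_aux {K : Set (Finset V)} {α β α' β' : Finset V} {v w v' w' : V}
    {f : Finset V}
    (hlink' : linkOf K α' = bdry β')
    (hα'β' : α' ∩ β' = ∅)
    (hαβ : α ∩ β = ∅)
    (hlink : linkOf K α = bdry β)
    (hvβ : v ∈ β) (hwβ : w ∈ β) (hvw : v ≠ w)
    (hv'β' : v' ∈ β') (hw'β' : w' ∈ β')
    (hf : f = (α ∪ β) \ {v, w})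
    (hf' : f = (α' ∪ β') \ {v', w'}) :
    v = v' ∨ v = w' := by
  have disj : ∀ {s t : Finset V}, s ∩ t = ∅ → ∀ {x : V}, x ∈ s → x ∈ t → False := by
    intro s t hst x hxs hxt
    have : x ∈ s ∩ t := mem_inter.mpr ⟨hxs, hxt⟩
    rw [hst] at this
    exact notMem_empty _ this
  have hwα : w ∉ α := fun hc => disj hαβ hc hwβ
  -- `α ∪ (β \ {w}) ∈ K`
  have hg : α ∪ (β \ {w}) ∈ K := by
    have h1 : β \ {w} ∈ bdry β :=
      sdiff_ssubset (by simpa using hwβ) (singleton_nonempty w)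
    rw [← hlink] at h1
    obtain ⟨_, h2⟩ := h1
    rwa [union_comm] at h2
  have hfv : f ∪ {v} = α ∪ (β \ {w}) := by
    ext x
    by_cases hxv : x = v
    · subst hxv
      simp [hvβ, hvw]
    · by_cases hxw : x = w
      · subst hxw
        simp [hf, hwα, hxv]
      · simp [hf, hxv, hxw]
  have hvf : v ∉ f := by
    rw [hf]; simp
  have hα'f : α' ⊆ f := by
    intro x hx
    rw [hf']
    rw [mem_sdiff]
    refine ⟨mem_union_left _ hx, ?_⟩
    simp only [mem_insert, mem_singleton]
    rintro (rfl | rfl)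
    · exact disj hα'β' hx hv'β'
    · exact disj hα'β' hx hw'β'
  have hvα' : v ∉ α' := fun hc => hvf (hα'f hc)
  have hγ : (f ∪ {v}) \ α' ∈ linkOf K α' := by
    refine ⟨sdiff_inter_self _ _, ?_⟩
    rw [sdiff_union_of_subset (hα'f.trans subset_union_left), hfv]
    exact hg
  rw [hlink'] at hγ
  have hγ2 : (f ∪ {v}) \ α' ⊂ β' := hγ
  have hvβ' : v ∈ β' := hγ2.subset (by simp [hvα'])
  by_contra hc
  push_neg at hc
  exact hvf (by rw [hf']; simp [mem_sdiff, hvβ', hc.1, hc.2])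

/-- distinct bistellar pairs of type `h` in `K` (with `n = 2h`)
have disjoint sets `D_α`, `D_{α'}`. -/
theorem D_sets_disjoint (h : ℕ) (hh : 1 ≤ h) (K : Set (Finset V))
    (hK : IsSimplicialComplex K) (α β α' β' : Finset V)
    (hpair : IsBistellarPair K (2 * h) h α β)
    (hpair' : IsBistellarPair K (2 * h) h α' β')
    (hne : (α, β) ≠ (α', β')) :
    {f | ∃ v ∈ β, ∃ w ∈ β, v ≠ w ∧ f = (α ∪ β) \ {v, w}} ∩
      {f | ∃ v ∈ β', ∃ w ∈ β', v ≠ w ∧ f = (α' ∪ β') \ {v, w}} = ∅ := by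
  rw [Set.eq_empty_iff_forall_notMem]
  rintro f ⟨⟨v, hvβ, w, hwβ, hvw, hf⟩, ⟨v', hv'β', w', hw'β', hv'w', hf'⟩⟩
  obtain ⟨hαK, hαc, hβc, hαβ, hβK, hlink⟩ := hpair
  obtain ⟨hα'K, hα'c, hβ'c, hα'β', hβ'K, hlink'⟩ := hpair'
  have hv : v = v' ∨ v = w' :=
    mem_pair_aux hlink' hα'β' hαβ hlink hvβ hwβ hvw hv'β' hw'β' hf hf'
  have hw : w = v' ∨ w = w' :=
    mem_pair_aux hlink' hα'β' hαβ hlink hwβ hvβ hvw.symm hv'β' hw'β'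
      (by rw [hf, pair_comm v w]) hf'
  have hsub : ({v, w} : Finset V) ⊆ {v', w'} := by
    intro x hx
    simp only [mem_insert, mem_singleton] at hx ⊢
    rcases hx with rfl | rfl
    exacts [hv, hw]
  have hpairs : ({v, w} : Finset V) = {v', w'} :=
    eq_of_subset_of_card_le hsub (by rw [card_pair hv'w', card_pair hvw])
  have hunion : α ∪ β = α' ∪ β' := by
    have h1 : f ∪ {v, w} = α ∪ β := by
      rw [hf]
      refine sdiff_union_of_subset ?_
      intro x hx
      simp only [mem_insert, mem_singleton] at hx
      rcases hx with rfl | rfl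
      exacts [mem_union_right _ hvβ, mem_union_right _ hwβ]
    have h2 : f ∪ {v', w'} = α' ∪ β' := by
      rw [hf']
      refine sdiff_union_of_subset ?_
      intro x hx
      simp only [mem_insert, mem_singleton] at hx
      rcases hx with rfl | rfl
      exacts [mem_union_right _ hv'β', mem_union_right _ hw'β']
    rw [← h1, ← h2, hpairs]
  have hmemβ' : β \ α' ⊆ β' := by
    intro x hx
    rw [mem_sdiff] at hx
    have hx1 : x ∈ α' ∪ β' := hunion ▸ mem_union_right _ hx.1
    rcases mem_union.mp hx1 with hxx | hxx
    · exact absurd hxx hx.2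
    · exact hxx
  by_cases hcase : β \ α' = β'
  · have hβ'β : β' ⊆ β := hcase ▸ sdiff_subset
    have hββ' : β = β' := (eq_of_subset_of_card_le hβ'β (by rw [hβc, hβ'c])).symm
    have hαα' : α = α' := by
      ext x
      constructor
      · intro hx
        have hx1 : x ∈ α' ∪ β' := hunion ▸ mem_union_left _ hx
        rcases mem_union.mp hx1 with hxx | hxx
        · exact hxx
        · exfalso
          have : x ∈ α ∩ β := mem_inter.mpr ⟨hx, hββ' ▸ hxx⟩
          rw [hαβ] at this
          exact notMem_empty _ this
      · intro hx
        have hx1 : x ∈ α ∪ β := hunion ▸ mem_union_left _ hx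
        rcases mem_union.mp hx1 with hxx | hxx
        · exact hxx
        · exfalso
          have : x ∈ α' ∩ β' := mem_inter.mpr ⟨hx, hββ' ▸ hxx⟩
          rw [hα'β'] at this
          exact notMem_empty _ this
    exact hne (by rw [hαα', hββ'])
  · have hss : β \ α' ⊂ β' := ssubset_of_subset_of_ne hmemβ' hcase
    have hmem : β \ α' ∈ linkOf K α' := by rw [hlink']; exact hss
    obtain ⟨_, hmemK⟩ := hmem
    have hβsub : β ⊆ (β \ α') ∪ α' := by
      intro x hx
      by_cases hxα' : x ∈ α'
      · exact mem_union_right _ hxα'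
      · exact mem_union_left _ (mem_sdiff.mpr ⟨hx, hxα'⟩)
    exact hβK (hK _ hmemK β hβsub)
end
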